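/- Let A be a real n×n matrix satisfying ‖Ay‖ ≥ ‖y‖ for all y ∈ ℝ^n, let b ∈ ℝ^n, γ > 0, and suppose x* satisfies Ax* − |x*| − b = 0, where |·| is the SOC absolute value. Write r(x) = Ax − |x| − b, h(x) = γ·Aᵀ(b + |x| − Ax), and V(x) = e^{‖x − x*‖²} − 1. If x : ℝ → ℝ^n is differentiable with x'(t) = h(x(t)) for all t, then for every t the function V ∘ x is differentiable at t with derivative d/dt V(x(t)) = −2γ·e^{‖x(t) − x*‖²}·⟨A(x(t) − x*), r(x(t))⟩ ≤ −γ·e^{‖x(t) − x*‖²}·‖r(x(t))‖² ≤ 0. -/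

import Mathlib

open scoped Classical RealInnerProductSpace

noncomputable section

/-- The "tail" `x₂ ∈ ℝ^{n-1}` of a vector `x = (x₁, x₂) ∈ ℝ × ℝ^{n-1}`,
modelled as `x ∈ ℝ^{n}` via `EuclideanSpace ℝ (Fin (n+1))`. -/
def socTail {n : ℕ} (x : EuclideanSpace ℝ (Fin (n + 1))) : EuclideanSpace ℝ (Fin n) :=
  WithLp.toLp 2 (fun i => x i.succ)

/-- The second-order cone `K = {(x₁, x₂) ∈ ℝ × ℝ^{n-1} : ‖x₂‖ ≤ x₁}`. -/
def soc (n : ℕ) : Set (EuclideanSpace ℝ (Fin (n + 1))) :=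
  {x | ‖socTail x‖ ≤ x 0}

/-- The SOC absolute value `|x|`. -/
def socAbs {n : ℕ} (x : EuclideanSpace ℝ (Fin (n + 1))) :
    EuclideanSpace ℝ (Fin (n + 1)) :=
  if socTail x = 0 then
    WithLp.toLp 2 (fun i => if i = 0 then |x 0| else 0)
  else
    WithLp.toLp 2 (fun i =>
      if i = 0 then (|x 0 - ‖socTail x‖| + |x 0 + ‖socTail x‖|) / 2
      else ((|x 0 + ‖socTail x‖| - |x 0 - ‖socTail x‖|) / 2) * (x i / ‖socTail x‖))

/- ### Auxiliary lemmas -/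

lemma inner_eu {m : ℕ} (a b : EuclideanSpace ℝ (Fin m)) : ⟪a, b⟫ = ∑ i, a i * b i := by
  simp [PiLp.inner_apply, RCLike.inner_apply]
  exact Finset.sum_congr rfl fun i _ => mul_comm _ _

lemma tail_inner {n : ℕ} (x y : EuclideanSpace ℝ (Fin (n + 1))) :
    ∑ i : Fin n, x i.succ * y i.succ = ⟪socTail x, socTail y⟫ := by
  rw [inner_eu]; rfl

lemma socAbs_of_tail_eq_zero {n : ℕ} (x : EuclideanSpace ℝ (Fin (n + 1)))
    (h : socTail x = 0) :
    socAbs x = WithLp.toLp 2 (fun i => if i = 0 then |x 0| else 0) := by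
  rw [socAbs, if_pos h]

lemma socAbs_of_tail_ne_zero {n : ℕ} (x : EuclideanSpace ℝ (Fin (n + 1)))
    (h : socTail x ≠ 0) :
    socAbs x = WithLp.toLp 2 (fun i =>
      if i = 0 then (|x 0 - ‖socTail x‖| + |x 0 + ‖socTail x‖|) / 2
      else ((|x 0 + ‖socTail x‖| - |x 0 - ‖socTail x‖|) / 2) * (x i / ‖socTail x‖)) := by
  rw [socAbs, if_neg h]

lemma key_scalar (x1 y1 s t d : ℝ) (hs : 0 < s) (ht : 0 < t) (hd : |d| ≤ s * t) :
    x1 * y1 + d ≤ ((|x1 - s| + |x1 + s|) / 2) * ((|y1 - t| + |y1 + t|) / 2)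
      + ((|x1 + s| - |x1 - s|) / 2) * ((|y1 + t| - |y1 - t|) / 2) * (d / (s * t)) := by
  have hst : 0 < s * t := mul_pos hs ht
  obtain ⟨hd1, hd2⟩ := abs_le.mp hd
  have hc1 : -1 ≤ d / (s * t) := by
    rw [le_div_iff₀ hst]; linarith
  have hc2 : d / (s * t) ≤ 1 := by
    rw [div_le_one hst]; linarith
  have hdc : d = (d / (s * t)) * (s * t) := by field_simp
  set c := d / (s * t) with hc
  have e11 : (x1 - s) * (y1 - t) ≤ |x1 - s| * |y1 - t| := by
    rw [← abs_mul]; exact le_abs_self _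
  have e12 : (x1 - s) * (y1 + t) ≤ |x1 - s| * |y1 + t| := by
    rw [← abs_mul]; exact le_abs_self _
  have e21 : (x1 + s) * (y1 - t) ≤ |x1 + s| * |y1 - t| := by
    rw [← abs_mul]; exact le_abs_self _
  have e22 : (x1 + s) * (y1 + t) ≤ |x1 + s| * |y1 + t| := by
    rw [← abs_mul]; exact le_abs_self _
  nlinarith [mul_nonneg (by linarith : (0:ℝ) ≤ 1 + c)
      (by linarith : (0:ℝ) ≤ |x1 - s| * |y1 - t| - (x1 - s) * (y1 - t)),
    mul_nonneg (by linarith : (0:ℝ) ≤ 1 + c)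
      (by linarith : (0:ℝ) ≤ |x1 + s| * |y1 + t| - (x1 + s) * (y1 + t)),
    mul_nonneg (by linarith : (0:ℝ) ≤ 1 - c)
      (by linarith : (0:ℝ) ≤ |x1 - s| * |y1 + t| - (x1 - s) * (y1 + t)),
    mul_nonneg (by linarith : (0:ℝ) ≤ 1 - c)
      (by linarith : (0:ℝ) ≤ |x1 + s| * |y1 - t| - (x1 + s) * (y1 - t))]

lemma inner_socAbs_self {n : ℕ} (x : EuclideanSpace ℝ (Fin (n + 1))) :
    ⟪socAbs x, socAbs x⟫ = ⟪x, x⟫ := by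
  rw [inner_eu, inner_eu, Fin.sum_univ_succ, Fin.sum_univ_succ]
  by_cases hx : socTail x = 0
  · rw [socAbs_of_tail_eq_zero x hx]
    simp only [eq_self_iff_true, if_true, Fin.succ_ne_zero, if_false, mul_zero,
      Finset.sum_const_zero]
    have ht : ∑ i : Fin n, x i.succ * x i.succ = 0 := by
      rw [tail_inner, hx, inner_zero_left]
    rw [ht, abs_mul_abs_self]
  · rw [socAbs_of_tail_ne_zero x hx]
    simp only [eq_self_iff_true, if_true, Fin.succ_ne_zero, if_false]
    set s := ‖socTail x‖ with hsdef
    have hs : 0 < s := norm_pos_iff.mpr hx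
    have hsum : ∑ i : Fin n, x i.succ * x i.succ = s ^ 2 := by
      rw [tail_inner, real_inner_self_eq_norm_sq]
    have hterm : ∀ i : Fin n,
        ((|x 0 + s| - |x 0 - s|) / 2 * (x i.succ / s)) *
          ((|x 0 + s| - |x 0 - s|) / 2 * (x i.succ / s))
        = ((|x 0 + s| - |x 0 - s|) / 2) ^ 2 / s ^ 2 * (x i.succ * x i.succ) := by
      intro i; field_simp
    rw [Finset.sum_congr rfl fun i _ => hterm i, ← Finset.mul_sum, hsum,
      div_mul_cancel₀ _ (by positivity : s ^ 2 ≠ 0)]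
    have e1 : |x 0 - s| * |x 0 - s| = (x 0 - s) * (x 0 - s) := abs_mul_abs_self _
    have e2 : |x 0 + s| * |x 0 + s| = (x 0 + s) * (x 0 + s) := abs_mul_abs_self _
    linear_combination e1 / 2 + e2 / 2

lemma inner_le_inner_socAbs {n : ℕ} (x y : EuclideanSpace ℝ (Fin (n + 1))) :
    ⟪x, y⟫ ≤ ⟪socAbs x, socAbs y⟫ := by
  rw [inner_eu, inner_eu, Fin.sum_univ_succ, Fin.sum_univ_succ, tail_inner]
  have habs : ∀ a b hb : ℝ, |a| ≤ hb → 0 ≤ hb → a * b ≤ |a| * |b| := by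
    intro a b hb _ _; rw [← abs_mul]; exact le_abs_self _
  by_cases hx : socTail x = 0
  · rw [socAbs_of_tail_eq_zero x hx, hx, inner_zero_left, add_zero]
    by_cases hy : socTail y = 0
    · rw [socAbs_of_tail_eq_zero y hy]
      simp only [eq_self_iff_true, if_true, Fin.succ_ne_zero, if_false, zero_mul, mul_zero,
        Finset.sum_const_zero, add_zero]
      calc x 0 * y 0 ≤ |x 0 * y 0| := le_abs_self _
        _ = |x 0| * |y 0| := abs_mul _ _
    · rw [socAbs_of_tail_ne_zero y hy]
      simp only [eq_self_iff_true, if_true, Fin.succ_ne_zero, if_false, zero_mul,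
        Finset.sum_const_zero, add_zero]
      set t := ‖socTail y‖ with htdef
      have hy0 : |y 0| ≤ (|y 0 - t| + |y 0 + t|) / 2 := by
        have := abs_add_le (y 0 - t) (y 0 + t)
        have h2 : |(y 0 - t) + (y 0 + t)| = |2 * y 0| := by ring_nf
        rw [h2, abs_mul, abs_two] at this
        linarith
      calc x 0 * y 0 ≤ |x 0| * |y 0| := by rw [← abs_mul]; exact le_abs_self _
        _ ≤ |x 0| * ((|y 0 - t| + |y 0 + t|) / 2) :=
            mul_le_mul_of_nonneg_left hy0 (abs_nonneg _)
  · by_cases hy : socTail y = 0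
    · rw [socAbs_of_tail_ne_zero x hx, socAbs_of_tail_eq_zero y hy, hy, inner_zero_right,
        add_zero]
      simp only [eq_self_iff_true, if_true, Fin.succ_ne_zero, if_false, mul_zero,
        Finset.sum_const_zero, add_zero]
      set s := ‖socTail x‖ with hsdef
      have hx0 : |x 0| ≤ (|x 0 - s| + |x 0 + s|) / 2 := by
        have := abs_add_le (x 0 - s) (x 0 + s)
        have h2 : |(x 0 - s) + (x 0 + s)| = |2 * x 0| := by ring_nf
        rw [h2, abs_mul, abs_two] at this
        linarith
      calc x 0 * y 0 ≤ |x 0| * |y 0| := by rw [← abs_mul]; exact le_abs_self _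
        _ ≤ ((|x 0 - s| + |x 0 + s|) / 2) * |y 0| :=
            mul_le_mul_of_nonneg_right hx0 (abs_nonneg _)
    · rw [socAbs_of_tail_ne_zero x hx, socAbs_of_tail_ne_zero y hy]
      simp only [eq_self_iff_true, if_true, Fin.succ_ne_zero, if_false]
      set s := ‖socTail x‖ with hsdef
      set t := ‖socTail y‖ with htdef
      have hs : 0 < s := norm_pos_iff.mpr hx
      have ht : 0 < t := norm_pos_iff.mpr hy
      set d : ℝ := ⟪socTail x, socTail y⟫ with hddef
      have hd : |d| ≤ s * t := abs_real_inner_le_norm _ _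
      have hterm : ∀ i : Fin n,
          ((|x 0 + s| - |x 0 - s|) / 2 * (x i.succ / s)) *
            ((|y 0 + t| - |y 0 - t|) / 2 * (y i.succ / t))
          = ((|x 0 + s| - |x 0 - s|) / 2) * ((|y 0 + t| - |y 0 - t|) / 2) / (s * t) *
              (x i.succ * y i.succ) := by
        intro i; field_simp
      rw [Finset.sum_congr rfl fun i _ => hterm i, ← Finset.mul_sum, tail_inner, ← hddef]
      have hkey := key_scalar (x 0) (y 0) s t d hs ht hd
      calc x 0 * y 0 + d
          ≤ ((|x 0 - s| + |x 0 + s|) / 2) * ((|y 0 - t| + |y 0 + t|) / 2)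
            + ((|x 0 + s| - |x 0 - s|) / 2) * ((|y 0 + t| - |y 0 - t|) / 2) * (d / (s * t)) :=
            hkey
        _ = (|x 0 - s| + |x 0 + s|) / 2 * ((|y 0 - t| + |y 0 + t|) / 2)
            + (|x 0 + s| - |x 0 - s|) / 2 * ((|y 0 + t| - |y 0 - t|) / 2) / (s * t) * d := by
            ring

lemma socAbs_lipschitz {n : ℕ} (x y : EuclideanSpace ℝ (Fin (n + 1))) :
    ‖socAbs x - socAbs y‖ ≤ ‖x - y‖ := by
  have nx : ‖socAbs x‖ ^ 2 = ‖x‖ ^ 2 := by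
    rw [← real_inner_self_eq_norm_sq, ← real_inner_self_eq_norm_sq, inner_socAbs_self]
  have ny : ‖socAbs y‖ ^ 2 = ‖y‖ ^ 2 := by
    rw [← real_inner_self_eq_norm_sq, ← real_inner_self_eq_norm_sq, inner_socAbs_self]
  have h1 : ‖socAbs x - socAbs y‖ ^ 2 ≤ ‖x - y‖ ^ 2 := by
    rw [norm_sub_sq_real, norm_sub_sq_real, nx, ny]
    linarith [inner_le_inner_socAbs x y]
  nlinarith [norm_nonneg (socAbs x - socAbs y), norm_nonneg (x - y)]

lemma fin_ineq1 (g e I R2 : ℝ) (hg : 0 < g) (he : 0 < e) (h : R2 ≤ 2 * I) :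
    -2 * g * e * I ≤ -g * e * R2 := by
  nlinarith [mul_nonneg (mul_pos hg he).le (by linarith : (0:ℝ) ≤ 2 * I - R2)]

lemma fin_ineq2 (g e R2 : ℝ) (hg : 0 < g) (he : 0 < e) (h : 0 ≤ R2) :
    -g * e * R2 ≤ 0 := by
  nlinarith [mul_nonneg (mul_pos hg he).le h]

lemma transpose_inner {m : ℕ} (A : Matrix (Fin m) (Fin m) ℝ)
    (u w : EuclideanSpace ℝ (Fin m)) :
    ⟪u, Matrix.toEuclideanLin A.transpose w⟫ = ⟪Matrix.toEuclideanLin A u, w⟫ := by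
  have h : A.transpose = A.conjTranspose := by
    ext i j; simp [Matrix.conjTranspose_apply]
  rw [h, Matrix.toEuclideanLin_conjTranspose_eq_adjoint, LinearMap.adjoint_inner_right]

/-- Lyapunov decrease along trajectories. -/
theorem soc_lyapunov_decrease (n : ℕ) (A : Matrix (Fin (n + 1)) (Fin (n + 1)) ℝ)
    (hA : ∀ y : EuclideanSpace ℝ (Fin (n + 1)), ‖y‖ ≤ ‖Matrix.toEuclideanLin A y‖)
    (b xs : EuclideanSpace ℝ (Fin (n + 1)))
    (hxs : Matrix.toEuclideanLin A xs - socAbs xs - b = 0)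
    (γ : ℝ) (hγ : 0 < γ) (x : ℝ → EuclideanSpace ℝ (Fin (n + 1)))
    (hx : ∀ t : ℝ,
      HasDerivAt x
        (γ • Matrix.toEuclideanLin A.transpose
          (b + socAbs (x t) - Matrix.toEuclideanLin A (x t))) t) :
    ∀ t : ℝ,
      HasDerivAt (fun s => Real.exp (‖x s - xs‖ ^ 2) - 1)
          (-2 * γ * Real.exp (‖x t - xs‖ ^ 2) *
            ⟪Matrix.toEuclideanLin A (x t - xs),
              Matrix.toEuclideanLin A (x t) - socAbs (x t) - b⟫) t ∧
        -2 * γ * Real.exp (‖x t - xs‖ ^ 2) *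
            ⟪Matrix.toEuclideanLin A (x t - xs),
              Matrix.toEuclideanLin A (x t) - socAbs (x t) - b⟫ ≤
          -γ * Real.exp (‖x t - xs‖ ^ 2) *
            ‖Matrix.toEuclideanLin A (x t) - socAbs (x t) - b‖ ^ 2 ∧
        -γ * Real.exp (‖x t - xs‖ ^ 2) *
            ‖Matrix.toEuclideanLin A (x t) - socAbs (x t) - b‖ ^ 2 ≤ 0 := by
  intro t
  set L := Matrix.toEuclideanLin A with hL
  set v : EuclideanSpace ℝ (Fin (n + 1)) :=
    γ • Matrix.toEuclideanLin A.transpose (b + socAbs (x t) - L (x t)) with hv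
  set r : EuclideanSpace ℝ (Fin (n + 1)) := L (x t) - socAbs (x t) - b with hr
  set u : EuclideanSpace ℝ (Fin (n + 1)) := x t - xs with huu
  -- basic identities
  have hw : b + socAbs (x t) - L (x t) = -r := by rw [hr]; abel
  have hinner_uv : ⟪u, v⟫ = -(γ * ⟪L u, r⟫) := by
    rw [hv, hw, real_inner_smul_right, transpose_inner, inner_neg_right]
    ring
  -- derivative
  have hu : HasDerivAt (fun s => x s - xs) v t := (hx t).sub_const xs
  have hinner : HasDerivAt (fun s => ⟪x s - xs, x s - xs⟫) (2 * ⟪u, v⟫) t := by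
    have h := hu.inner ℝ hu
    have e : ⟪x t - xs, v⟫ + ⟪v, x t - xs⟫ = 2 * ⟪x t - xs, v⟫ := by
      rw [real_inner_comm (x t - xs) v]; ring
    rw [e] at h
    exact h
  have hfun : (fun s => ⟪x s - xs, x s - xs⟫) = fun s => ‖x s - xs‖ ^ 2 :=
    funext fun s => real_inner_self_eq_norm_sq _
  rw [hfun] at hinner
  have hexp : HasDerivAt (fun s => Real.exp (‖x s - xs‖ ^ 2) - 1)
      (Real.exp (‖x t - xs‖ ^ 2) * (2 * ⟪u, v⟫)) t := hinner.exp.sub_const 1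
  have hval : Real.exp (‖x t - xs‖ ^ 2) * (2 * ⟪u, v⟫)
      = -2 * γ * Real.exp (‖x t - xs‖ ^ 2) * ⟪L u, r⟫ := by
    rw [hinner_uv]; ring
  rw [hval] at hexp
  -- key inequality
  have hAxs : L xs = socAbs xs + b := by rwa [sub_sub, sub_eq_zero] at hxs
  have hrw : r = L u - (socAbs (x t) - socAbs xs) := by
    rw [hr, huu, map_sub, hAxs]; abel
  have hlip : ‖socAbs (x t) - socAbs xs‖ ≤ ‖u‖ := socAbs_lipschitz (x t) xs
  have hAu : ‖u‖ ≤ ‖L u‖ := hA u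
  set w : EuclideanSpace ℝ (Fin (n + 1)) := socAbs (x t) - socAbs xs with hwdef
  have hexpand : ⟪L u, r⟫ = ‖L u‖ ^ 2 - ⟪L u, w⟫ := by
    rw [hrw, inner_sub_right, real_inner_self_eq_norm_sq]
  have hexpand2 : ‖r‖ ^ 2 = ‖L u‖ ^ 2 - 2 * ⟪L u, w⟫ + ‖w‖ ^ 2 := by
    rw [hrw, norm_sub_sq_real]
  have hkey : ‖r‖ ^ 2 ≤ 2 * ⟪L u, r⟫ := by
    nlinarith [hlip, hAu, norm_nonneg u, norm_nonneg w, norm_nonneg (L u)]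
  exact ⟨hexp, fin_ineq1 γ _ _ _ hγ (Real.exp_pos _) hkey,
    fin_ineq2 γ _ _ hγ (Real.exp_pos _) (sq_nonneg _)⟩

end
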